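/- For every integer n ≥ 5, Σ_{k=1}^{n} (−1)^(k−1) · C(2n, n−k) · k^9 = C(2n, n) · n^2 · (496n^3 − 672n^2 + 344n − 63) / (2(2n−1)(2n−3)(2n−5)(2n−7)(2n−9)). -/

import Mathlib

open Finset

/-
Gosper's algorithm: with `H j = bNineAntidiff n j = (-1)^j C(2n, n+j) P(n, j)` for the polynomial
`P = bNineCert`, each summand times `D = bNineDenom n` equals `H (j+1) - H j`. This reduces to the
polynomial identity `bNineCert_recurrence` once `C(2n, n-j)` is rewritten as `C(2n, n+j)`, whose
consecutive ratio is `(n-j)/(n+j+1)` and which, unlike `C(2n, n-j)` with truncated subtraction,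
vanishes at `j = n+1`. So the sum telescopes to `-D⁻¹ H 1`.
-/

section

variable {R : Type*} [CommRing R]

def bNineDenom (n : R) : R :=
  2 * (2 * n - 1) * (2 * n - 3) * (2 * n - 5) * (2 * n - 7) * (2 * n - 9)

def bNineCert (n k : R) : R :=
  (63 * n ^ 2 - 344 * n ^ 3 + 672 * n ^ 4 - 496 * n ^ 5)
  + (-63 + 344 * n - 1092 * n ^ 2 + 2632 * n ^ 3 - 3816 * n ^ 4 + 2448 * n ^ 5) * k ^ 2
  + (420 - 2136 * n + 4698 * n ^ 2 - 6312 * n ^ 3 + 5208 * n ^ 4 - 2016 * n ^ 5) * k ^ 4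
  + (-882 + 3864 * n - 6468 * n ^ 2 + 5880 * n ^ 3 - 3024 * n ^ 4 + 672 * n ^ 5) * k ^ 6
  + (1260 - 4809 * n + 6192 * n ^ 2 - 3768 * n ^ 3 + 1152 * n ^ 4 - 144 * n ^ 5) * k ^ 8
  + (-945 + 3378 * n - 3800 * n ^ 2 + 1840 * n ^ 3 - 400 * n ^ 4 + 32 * n ^ 5) * k ^ 9
  + (210 - 704 * n + 688 * n ^ 2 - 256 * n ^ 3 + 32 * n ^ 4) * k ^ 10

theorem bNineCert_recurrence (n k : R) :
    (n + k + 1) * (k ^ 9 * bNineDenom n - bNineCert n k) = (n - k) * bNineCert n (k + 1) := by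
  unfold bNineCert bNineDenom
  ring

theorem bNineCert_one (n : R) :
    bNineCert n 1 = n * (n + 1) * (496 * n ^ 3 - 672 * n ^ 2 + 344 * n - 63) := by
  unfold bNineCert
  ring

theorem Nat.cast_choose_two_mul_add_succ_mul (n k : ℕ) (hk : k ≤ n) :
    ((2 * n).choose (n + k + 1) : R) * (n + k + 1) = (2 * n).choose (n + k) * (n - k) := by
  have h := Nat.choose_succ_right_eq (2 * n) (n + k)
  rw [show 2 * n - (n + k) = n - k by omega] at h
  have h' := congrArg (Nat.cast : ℕ → R) h
  push_cast [Nat.cast_sub hk] at h'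
  exact h'

end

theorem bNineDenom_natCast_ne_zero (n : ℕ) : bNineDenom (n : ℝ) ≠ 0 := by
  simp only [bNineDenom, ne_eq, mul_eq_zero, sub_eq_zero, not_or]
  refine ⟨⟨⟨⟨⟨two_ne_zero, ?_⟩, ?_⟩, ?_⟩, ?_⟩, ?_⟩ <;> norm_cast <;> omega

noncomputable def bNineAntidiff (n j : ℕ) : ℝ :=
  (-1) ^ j * (2 * n).choose (n + j) * bNineCert (n : ℝ) j

theorem bNineDenom_mul_summand (n j : ℕ) (hj : j ∈ Icc 1 n) :
    bNineDenom (n : ℝ) * ((-1) ^ (j - 1) * (2 * n).choose (n - j) * (j : ℝ) ^ 9) =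
      bNineAntidiff n (j + 1) - bNineAntidiff n j := by
  obtain ⟨hj1, hjn⟩ := mem_Icc.mp hj
  obtain ⟨i, rfl⟩ := Nat.exists_eq_add_of_le' hj1
  rw [Nat.choose_symm_of_eq_add (by omega : 2 * n = (n - (i + 1)) + (n + (i + 1)))]
  have hratio := Nat.cast_choose_two_mul_add_succ_mul (R := ℝ) n (i + 1) hjn
  have hrec := bNineCert_recurrence (n : ℝ) (i + 1 : ℕ)
  have hne : (n : ℝ) + (i + 1 : ℕ) + 1 ≠ 0 := by positivity
  refine mul_left_cancel₀ hne ?_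
  simp only [bNineAntidiff, Nat.add_sub_cancel, pow_succ, ← add_assoc] at hratio hrec ⊢
  push_cast at hratio hrec ⊢
  linear_combination (-1) ^ i * ((2 * n).choose (n + i + 1) * hrec
    - bNineCert (n : ℝ) (i + 1 + 1) * hratio)

theorem bNineDenom_mul_sum (n : ℕ) :
    bNineDenom (n : ℝ) * ∑ k ∈ Icc 1 n, (-1) ^ (k - 1) * (2 * n).choose (n - k) * (k : ℝ) ^ 9 =
      (2 * n).choose (n + 1) * bNineCert (n : ℝ) 1 := by
  rw [mul_sum, sum_congr rfl (bNineDenom_mul_summand n), ← Ico_add_one_right_eq_Icc,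
    sum_Ico_sub (bNineAntidiff n) (by omega : 1 ≤ n + 1)]
  have htop : (2 * n).choose (n + (n + 1)) = 0 := Nat.choose_eq_zero_of_lt (by omega)
  simp [bNineAntidiff, htop]

theorem B_nine_eval (n : ℕ) :
    ∑ k ∈ Finset.Icc 1 n,
        (-1 : ℝ) ^ (k - 1) * (((2 * n).choose (n - k) : ℝ)) * (k : ℝ) ^ 9 =
      (((2 * n).choose n : ℝ)) * (n : ℝ) ^ 2 *
          (496 * (n : ℝ) ^ 3 - 672 * (n : ℝ) ^ 2 + 344 * (n : ℝ) - 63) /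
        (2 * (2 * (n : ℝ) - 1) * (2 * (n : ℝ) - 3) * (2 * (n : ℝ) - 5) *
          (2 * (n : ℝ) - 7) * (2 * (n : ℝ) - 9)) := by
  refine (eq_div_iff (bNineDenom_natCast_ne_zero n)).mpr ?_
  rw [mul_comm]
  have hsum := bNineDenom_mul_sum n
  have hratio := Nat.cast_choose_two_mul_add_succ_mul (R := ℝ) n 0 (Nat.zero_le n)
  simp only [add_zero, Nat.cast_zero, sub_zero] at hratio
  rw [bNineCert_one] at hsum
  linear_combination hsum + (n * (496 * (n : ℝ) ^ 3 - 672 * n ^ 2 + 344 * n - 63)) * hratio
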